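/- For every integer k ≥ 1 and all γ, γ' ∈ ℝ^k whose first coordinates satisfy γ₁, γ'₁ ∈ [0, π], one has |⟨ρ_k(γ), ρ_k(γ')⟩| ≤ max(|cos(γ₁ − γ'₁)|, |cos(γ₁ + γ'₁)|). (The inner-product bound used repeatedly in the conditional sector-test analysis, e.g. in the proofs of Lemma B.2 and Lemma D.7.) -/
import Mathlib


/-- The spherical-coordinate map `ρ_k : ℝ^k → ℝ^(k+1)`:
`ρ_k(α)_i = (∏_{j<i} sin α_j)·cos α_i` for `i < k` and `ρ_k(α)_k = ∏_j sin α_j`. -/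
noncomputable def sphCoord (k : ℕ) (α : Fin k → ℝ) : Fin (k + 1) → ℝ := fun i =>
  if h : (i : ℕ) < k then
    (∏ j ∈ Finset.univ.filter (fun j : Fin k => (j : ℕ) < (i : ℕ)), Real.sin (α j)) *
      Real.cos (α ⟨(i : ℕ), h⟩)
  else
    ∏ j, Real.sin (α j)


lemma sphCoord_zero (k : ℕ) (α : Fin (k+1) → ℝ) : sphCoord (k+1) α 0 = Real.cos (α 0) := by
  simp [sphCoord]

lemma filter_prod_succ {k : ℕ} (i : ℕ) (g : Fin (k+1) → ℝ) :
    ∏ j ∈ Finset.univ.filter (fun j : Fin (k+1) => (j:ℕ) < i+1), g j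
      = g 0 * ∏ j ∈ Finset.univ.filter (fun j : Fin k => (j:ℕ) < i), g j.succ := by
  rw [Finset.prod_filter, Finset.prod_filter, Fin.prod_univ_succ]
  simp [Nat.succ_lt_succ_iff]

lemma sphCoord_succ (k : ℕ) (α : Fin (k+1) → ℝ) (i : Fin (k+1)) :
    sphCoord (k+1) α i.succ = Real.sin (α 0) * sphCoord k (Fin.tail α) i := by
  unfold sphCoord
  by_cases h : (i:ℕ) < k
  · rw [dif_pos (show ((i.succ : Fin (k+2)) : ℕ) < k+1 by simpa using Nat.succ_lt_succ h),
      dif_pos h]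
    simp only [Fin.val_succ]
    rw [filter_prod_succ (i:ℕ) (fun j => Real.sin (α j))]
    simp only [Fin.tail, Fin.succ_mk]
    ring
  · rw [dif_neg (by simpa using fun hh => h (Nat.lt_of_succ_lt_succ hh)), dif_neg h,
      Fin.prod_univ_succ]
    rfl

lemma sphCoord_inner_succ (k : ℕ) (α β : Fin (k+1) → ℝ) :
    ∑ i, sphCoord (k+1) α i * sphCoord (k+1) β i
      = Real.cos (α 0) * Real.cos (β 0)
        + Real.sin (α 0) * Real.sin (β 0) *
          ∑ i, sphCoord k (Fin.tail α) i * sphCoord k (Fin.tail β) i := by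
  rw [Fin.sum_univ_succ, sphCoord_zero, sphCoord_zero]
  congr 1
  rw [Finset.mul_sum]
  refine Finset.sum_congr rfl fun i _ => ?_
  rw [sphCoord_succ, sphCoord_succ]; ring

lemma sphCoord_norm (k : ℕ) (α : Fin k → ℝ) :
    ∑ i, sphCoord k α i * sphCoord k α i = 1 := by
  induction k with
  | zero => simp [sphCoord]
  | succ n ih =>
    rw [sphCoord_inner_succ, ih]
    nlinarith [Real.sin_sq_add_cos_sq (α 0)]

/-- The inner-product bound used in the conditional sector-test analysis:
`|⟨ρ_k(γ), ρ_k(γ')⟩| ≤ max(|cos(γ₁ − γ'₁)|, |cos(γ₁ + γ'₁)|)` when `γ₁, γ'₁ ∈ [0, π]`. -/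
theorem sphCoord_inner_abs_le (k : ℕ) (hk : 1 ≤ k) (γ γ' : Fin k → ℝ)
    (hγ : γ ⟨0, by omega⟩ ∈ Set.Icc 0 Real.pi) (hγ' : γ' ⟨0, by omega⟩ ∈ Set.Icc 0 Real.pi) :
    |∑ i, sphCoord k γ i * sphCoord k γ' i| ≤
      max |Real.cos (γ ⟨0, by omega⟩ - γ' ⟨0, by omega⟩)|
        |Real.cos (γ ⟨0, by omega⟩ + γ' ⟨0, by omega⟩)| := by
  obtain ⟨n, rfl⟩ : ∃ n, k = n+1 := ⟨k-1, by omega⟩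
  have h0 : (⟨0, by omega⟩ : Fin (n+1)) = 0 := rfl
  rw [h0] at *
  set a := γ 0
  set b := γ' 0
  set S := ∑ i, sphCoord n (Fin.tail γ) i * sphCoord n (Fin.tail γ') i with hSdef
  rw [sphCoord_inner_succ]
  have hS : |S| ≤ 1 := by
    have cs := Finset.sum_mul_sq_le_sq_mul_sq Finset.univ
      (fun i => sphCoord n (Fin.tail γ) i) (fun i => sphCoord n (Fin.tail γ') i)
    have h1 : ∑ i, sphCoord n (Fin.tail γ) i ^ 2 = 1 := by
      simpa [sq] using sphCoord_norm n (Fin.tail γ)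
    have h2 : ∑ i, sphCoord n (Fin.tail γ') i ^ 2 = 1 := by
      simpa [sq] using sphCoord_norm n (Fin.tail γ')
    rw [h1, h2, one_mul] at cs
    nlinarith [sq_abs S, abs_nonneg S]
  have hsa : 0 ≤ Real.sin a := Real.sin_nonneg_of_mem_Icc hγ
  have hsb : 0 ≤ Real.sin b := Real.sin_nonneg_of_mem_Icc hγ'
  have hs : 0 ≤ Real.sin a * Real.sin b := mul_nonneg hsa hsb
  set c := Real.cos a * Real.cos b
  set s := Real.sin a * Real.sin b
  rw [Real.cos_sub, Real.cos_add]
  have key : |c + s * S| ≤ |c| + s := by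
    calc |c + s * S| ≤ |c| + |s * S| := abs_add_le _ _
      _ = |c| + s * |S| := by rw [abs_mul s S, abs_of_nonneg hs]
      _ ≤ |c| + s := by nlinarith
  rcases le_or_gt 0 c with h | h
  · refine key.trans (le_max_of_le_left ?_)
    rw [abs_of_nonneg (by linarith : (0:ℝ) ≤ c + s), abs_of_nonneg h]
  · refine key.trans (le_max_of_le_right ?_)
    rw [abs_of_neg h, abs_of_neg (by linarith : c - s < 0)]
    linarith
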